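/- Let p be an odd prime not dividing 10, l_p the order of 10 mod p, and write (10^{l_p} − 1)/p = p^{m} · k with p ∤ k. Then for all n with 1 ≤ n ≤ m + 1, the order of 10 modulo p^n equals l_p. -/
import Mathlib


theorem stmt_10 (p : ℕ) (hp : p.Prime) (hodd : Odd p) (hnd : ¬ p ∣ 10)
    (l : ℕ) (hl : l = orderOf (10 : ZMod p))
    (m k : ℕ) (hk : ¬ p ∣ k) (hfac : (10 ^ l - 1) / p = p ^ m * k) :
    ∀ n : ℕ, 1 ≤ n → n ≤ m + 1 → orderOf (10 : ZMod (p ^ n)) = l := by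
  intro n h1 h2
  have hl1 : (10 : ZMod p) ^ l = 1 := by rw [hl]; exact pow_orderOf_eq_one _
  have hple : 1 ≤ 10 ^ l := Nat.one_le_pow _ _ (by norm_num)
  have hdvd : p ∣ 10 ^ l - 1 := by
    have h0 : ((10 ^ l - 1 : ℕ) : ZMod p) = 0 := by
      rw [Nat.cast_sub hple]
      push_cast
      rw [hl1]
      ring
    exact (ZMod.natCast_eq_zero_iff _ _).mp h0
  have heq : 10 ^ l - 1 = p ^ (m + 1) * k := by
    have := Nat.div_mul_cancel hdvd
    rw [hfac] at this
    rw [← this]; ring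
  have hdvdn : (p : ℕ) ^ n ∣ 10 ^ l - 1 := by
    rw [heq]
    exact Dvd.dvd.mul_right (pow_dvd_pow p h2) k
  have hln : (10 : ZMod (p ^ n)) ^ l = 1 := by
    have h0 : ((10 ^ l - 1 : ℕ) : ZMod (p ^ n)) = 0 :=
      (ZMod.natCast_eq_zero_iff _ _).mpr hdvdn
    rw [Nat.cast_sub hple] at h0
    push_cast at h0
    linear_combination h0
  have hd1 : orderOf (10 : ZMod (p ^ n)) ∣ l := orderOf_dvd_of_pow_eq_one hln
  have hd2 : l ∣ orderOf (10 : ZMod (p ^ n)) := by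
    rw [hl]
    apply orderOf_dvd_of_pow_eq_one
    have hpd : p ∣ p ^ n := dvd_pow_self p (Nat.one_le_iff_ne_zero.mp h1)
    have := congrArg (ZMod.castHom hpd (ZMod p)) (pow_orderOf_eq_one (10 : ZMod (p ^ n)))
    rw [map_pow, map_one, map_ofNat] at this
    exact this
  exact Nat.dvd_antisymm hd1 hd2
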